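/- For every ℓ ≥ 1 the finite free cumulants of the degree-ℓ Hermite polynomial He_ℓ are given by κ_j^ℓ(He_ℓ) = ℓ if j = 2 and κ_j^ℓ(He_ℓ) = 0 for all other 1 ≤ j ≤ ℓ. -/

import Mathlib

open Polynomial Finset

/-- Normalized repeated derivative `∂_{k|N} p = ((N-k)!/N!) p^{(N-k)}`. -/
noncomputable def dOp (N k : ℕ) (p : Polynomial ℝ) : Polynomial ℝ :=
  C ((Nat.factorial (N - k) : ℝ) / (Nat.factorial N : ℝ)) * (derivative^[N - k] p)

/-- Dilation of a degree-`d` polynomial: `(𝒟_a p)(x) = a^d p(x/a)`. -/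
noncomputable def dil (d : ℕ) (a : ℝ) (p : Polynomial ℝ) : Polynomial ℝ :=
  C (a ^ d) * p.comp (C a⁻¹ * X)

/-- Probabilists' Hermite polynomial. -/
noncomputable def hermiteP (k : ℕ) : Polynomial ℝ :=
  ∑ j ∈ Finset.range (k / 2 + 1),
    C ((Nat.factorial k : ℝ) * (-1) ^ j /
        ((Nat.factorial j : ℝ) * (Nat.factorial (k - 2 * j)) * 2 ^ j)) * X ^ (k - 2 * j)

/-- The signed coefficients `a_k = (-1)^k coeff_{N-k}(p)` of a monic degree-`N` polynomial. -/
noncomputable def coeffSeq (N : ℕ) (p : Polynomial ℝ) (k : ℕ) : ℝ :=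
  (-1 : ℝ) ^ k * p.coeff (N - k)

/-- `κ : ℕ → ℝ` is the sequence of finite free cumulants associated to the signed
coefficient sequence `a` of a monic degree-`N` polynomial. -/
noncomputable def cumulantRel (N : ℕ) (a κ : ℕ → ℝ) : Prop :=
  ∀ k, 1 ≤ k → k ≤ N →
    a k = ((Nat.descFactorial N k : ℝ) / ((N : ℝ) ^ k * (Nat.factorial k : ℝ))) *
      ∑ π : Finpartition (Finset.univ : Finset (Fin k)),
        (-1 : ℝ) ^ (k - π.parts.card) * (N : ℝ) ^ π.parts.card *
          ∏ V ∈ π.parts, ((Nat.factorial (V.card - 1) : ℝ) * κ V.card)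

/-- Finite free additive convolution `p ⊞_N q`. -/
noncomputable def ffconv (N : ℕ) (p q : Polynomial ℝ) : Polynomial ℝ :=
  X ^ N + ∑ k ∈ Finset.Icc 1 N,
    C ((-1 : ℝ) ^ k *
      ∑ ij ∈ antidiagonal k,
        ((Nat.factorial (N - ij.1) : ℝ) * (Nat.factorial (N - ij.2) : ℝ) /
            ((Nat.factorial N : ℝ) * (Nat.factorial (N - k) : ℝ))) *
          coeffSeq N p ij.1 * coeffSeq N q ij.2) * X ^ (N - k)

/-- `j`-th moment of the empirical root distribution of `p`. -/
noncomputable def momentP (j : ℕ) (p : Polynomial ℝ) : ℝ :=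
  (1 / (p.natDegree : ℝ)) * (p.roots.map (fun r => r ^ j)).sum

/-- Apply the differential operator `P(d/dx)` to the polynomial `r`. -/
noncomputable def applyDiffOp (P r : Polynomial ℝ) : Polynomial ℝ :=
  ∑ i ∈ Finset.range (P.natDegree + 1), C (P.coeff i) * derivative^[i] r

/-!
Expanding the product over blocks, the defining relation reads
`a_k = (N)_k / (N^k k!) · Σ_{π ∈ 𝒫(k)} Π_{V ∈ π} w(|V|)`
with `w(n) = (-1)^(n-1) N (n-1)! κ_n`. The one-block partition contributes `w(k)` and every
other partition only involves `w` below `k`, so the relation determines `κ_1, …, κ_N`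
recursively. For the candidate `κ = ℓ δ_{·2}` the weight `w` is supported on blocks of size
two, so only perfect matchings survive: there are `(2m-1)‼` of them on `2m` points and none on
an odd number of points. The resulting values `(ℓ)_{2m} (-1)^m / (2^m m!)` are exactly the signed
coefficients of `He_ℓ`.
-/

open scoped Nat

lemma Finset.card_sdiff_pair_add_two {α : Type*} [DecidableEq α] {s : Finset α} {a b : α}
    (ha : a ∈ s) (hb : b ∈ s.erase a) : #(s \ {a, b}) + 2 = #s := by
  rw [← card_pair (ne_of_mem_erase hb).symm,
    card_sdiff_add_card_eq_card (insert_subset ha (singleton_subset_iff.2 (mem_of_mem_erase hb)))]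

lemma Nat.factorial_two_mul_eq_mul_doubleFactorial (m : ℕ) :
    (2 * m)! = 2 ^ m * m ! * (2 * m - 1)‼ := by
  obtain _ | m := m
  · rfl
  · rw [show 2 * (m + 1) = 2 * m + 1 + 1 by ring, Nat.factorial_eq_mul_doubleFactorial,
      show 2 * m + 1 + 1 = 2 * (m + 1) by ring, Nat.doubleFactorial_two_mul]
    rfl

namespace Finpartition

variable {α : Type*} [DecidableEq α] {s V : Finset α}

lemma parts_avoid_of_mem {π : Finpartition s} (hV : V ∈ π.parts) :
    (π.avoid V).parts = π.parts.erase V := by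
  ext W
  rw [mem_avoid, mem_erase]
  constructor
  · rintro ⟨U, hU, hUV, rfl⟩
    have hne : U ≠ V := by rintro rfl; exact hUV le_rfl
    have hdisj : Disjoint U V := π.disjoint hU hV hne
    rw [Finset.sdiff_eq_self_of_disjoint hdisj]
    exact ⟨hne, hU⟩
  · rintro ⟨hne, hW⟩
    have hdisj : Disjoint W V := π.disjoint hW hV hne
    exact ⟨W, hW, fun hle => π.ne_bot hW (hdisj.eq_bot_of_le hle),
      Finset.sdiff_eq_self_of_disjoint hdisj⟩

lemma card_lt_of_ne_indiscrete (hs : s ≠ ∅) {π : Finpartition s} (hπ : π ≠ indiscrete hs)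
    (hV : V ∈ π.parts) : #V < #s := by
  refine card_lt_card (ssubset_of_subset_of_ne (π.le hV) ?_)
  rintro rfl
  refine hπ (Finpartition.ext ?_)
  ext W
  rw [indiscrete_parts, mem_singleton]
  refine ⟨fun hW => ?_, by rintro rfl; exact hV⟩
  by_contra hne
  exact π.ne_bot hW ((π.disjoint hW hV hne).eq_bot_of_le (π.le hW))

lemma neg_one_pow_mul_pow_mul_prod {R : Type*} [CommRing R] (π : Finpartition s) (c : R)
    (f : ℕ → R) :
    (-1) ^ (#s - #π.parts) * c ^ #π.parts * ∏ V ∈ π.parts, f #V =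
      ∏ V ∈ π.parts, (-1) ^ (#V - 1) * c * f #V := by
  have hexp : ∑ V ∈ π.parts, (#V - 1) = #s - #π.parts := by
    rw [← π.sum_card_parts, card_eq_sum_ones π.parts, ← sum_tsub_distrib]
    exact fun V hV => card_pos.2 (π.nonempty_of_mem_parts hV)
  simp only [prod_mul_distrib, prod_const, prod_pow_eq_pow_sum, hexp]

end Finpartition

section PartitionSum

variable {α R : Type*} [DecidableEq α]

noncomputable def partitionSum [CommSemiring R] (h : ℕ → R) (s : Finset α) : R :=
  ∑ π : Finpartition s, ∏ V ∈ π.parts, h #V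

section CommSemiring

variable [CommSemiring R] (h : ℕ → R)

@[simp]
lemma partitionSum_empty : partitionSum h (∅ : Finset α) = 1 := by
  have : Unique (Finpartition (∅ : Finset α)) := inferInstanceAs (Unique (Finpartition ⊥))
  rw [partitionSum, Fintype.sum_unique, Finpartition.parts_eq_empty_iff.2 rfl, prod_empty]

lemma partitionSum_eq_sum_part {s : Finset α} {a : α} (ha : a ∈ s) :
    partitionSum h s = ∑ V ∈ s.powerset with a ∈ V, h #V * partitionSum h (s \ V) := by
  rw [partitionSum, ← sum_fiberwise_of_maps_to (g := fun π : Finpartition s => π.part a)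
    (t := {V ∈ s.powerset | a ∈ V}) fun π _ =>
      mem_filter.2 ⟨mem_powerset.2 (π.le (π.part_mem.2 ha)), π.mem_part ha⟩]
  refine sum_congr rfl fun V hV => ?_
  obtain ⟨hVs, haV⟩ : V ⊆ s ∧ a ∈ V := by simpa using hV
  let insertV (Q : Finpartition (s \ V)) : Finpartition s :=
    Q.extend (ne_empty_of_mem haV) sdiff_disjoint (sdiff_sup_cancel hVs)
  have hV_insertV (Q : Finpartition (s \ V)) : V ∈ (insertV Q).parts := mem_insert_self _ _
  rw [partitionSum, mul_sum]
  refine sum_nbij' (fun π => π.avoid V) insertV (fun _ _ => mem_univ _) (fun Q _ => ?_)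
    (fun π hπ => ?_) (fun Q _ => ?_) (fun π hπ => ?_)
  · simpa using (insertV Q).part_eq_of_mem (hV_insertV Q) haV
  · have hVπ : V ∈ π.parts := (mem_filter.1 hπ).2 ▸ π.part_mem.2 ha
    exact Finpartition.ext
      (by simp [insertV, Finpartition.parts_avoid_of_mem hVπ, insert_erase hVπ])
  · have hVQ : V ∉ Q.parts := fun hmem => by simpa [haV] using Q.le hmem haV
    exact Finpartition.ext (by
      rw [Finpartition.parts_avoid_of_mem (hV_insertV Q)]
      exact erase_insert hVQ)
  · have hVπ : V ∈ π.parts := (mem_filter.1 hπ).2 ▸ π.part_mem.2 ha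
    rw [Finpartition.parts_avoid_of_mem hVπ, mul_prod_erase _ (fun W => h #W) hVπ]

variable {h} (hh : ∀ n, n ≠ 2 → h n = 0)
include hh

lemma partitionSum_eq_sum_pair {s : Finset α} {a : α} (ha : a ∈ s) :
    partitionSum h s = ∑ b ∈ s.erase a, h 2 * partitionSum h (s \ {a, b}) := by
  have hpair : Set.InjOn (fun b => ({a, b} : Finset α)) (s.erase a) := fun b hb c _ hbc => by
    have hb_mem : b ∈ ({a, c} : Finset α) := by
      rw [← show ({a, b} : Finset α) = {a, c} from hbc]; simp
    simpa [ne_of_mem_erase hb] using hb_mem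
  rw [partitionSum_eq_sum_part h ha]
  calc _ = ∑ V ∈ (s.erase a).image (fun b => ({a, b} : Finset α)),
          h #V * partitionSum h (s \ V) := by
        refine (sum_subset (fun V hV => ?_) fun V hV hV' => ?_).symm
        · obtain ⟨b, hb, rfl⟩ := mem_image.1 hV
          simpa [insert_subset_iff, ha] using mem_of_mem_erase hb
        · obtain ⟨hVs, haV⟩ : V ⊆ s ∧ a ∈ V := by simpa using hV
          rw [hh, zero_mul]
          rintro hV2
          obtain ⟨b, hba, rfl⟩ : ∃ b, b ≠ a ∧ V = {a, b} := by
            obtain ⟨x, y, hxy, rfl⟩ := card_eq_two.1 hV2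
            rcases mem_insert.1 haV with rfl | hy
            · exact ⟨y, hxy.symm, rfl⟩
            · exact ⟨x, by simp_all, by simp_all [pair_comm]⟩
          exact hV' (mem_image.2 ⟨b, mem_erase.2 ⟨hba, hVs (by simp)⟩, rfl⟩)
    _ = _ := by
        rw [sum_image hpair]
        refine sum_congr rfl fun b hb => ?_
        rw [card_pair (ne_of_mem_erase hb).symm]

lemma partitionSum_of_card_eq_two_mul_add_one :
    ∀ {m : ℕ} {s : Finset α}, #s = 2 * m + 1 → partitionSum h s = 0
  | m, s, hs => by
    obtain ⟨a, ha⟩ : s.Nonempty := card_pos.1 (by omega)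
    rw [partitionSum_eq_sum_pair hh ha]
    refine sum_eq_zero fun b hb => ?_
    have hcard := card_sdiff_pair_add_two ha hb
    obtain _ | m := m
    · omega
    · rw [partitionSum_of_card_eq_two_mul_add_one (m := m) (by omega), mul_zero]

-- At `m = 0` the truncated `2 * 0 - 1 = 0` gives `0‼ = 1`, the usual value of `(-1)‼`.
lemma partitionSum_of_card_eq_two_mul :
    ∀ {m : ℕ} {s : Finset α}, #s = 2 * m → partitionSum h s = (2 * m - 1)‼ * h 2 ^ m
  | 0, s, hs => by simp_all
  | m + 1, s, hs => by
    obtain ⟨a, ha⟩ : s.Nonempty := card_pos.1 (by omega)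
    rw [partitionSum_eq_sum_pair hh ha]
    have hterm : ∀ b ∈ s.erase a, h 2 * partitionSum h (s \ {a, b}) =
        h 2 * ((2 * m - 1)‼ * h 2 ^ m) := fun b hb => by
      rw [partitionSum_of_card_eq_two_mul (m := m)
        (by have := card_sdiff_pair_add_two ha hb; omega)]
    rw [sum_congr rfl hterm, sum_const, card_erase_of_mem ha, hs,
      show 2 * (m + 1) - 1 = 2 * m + 1 by omega, Nat.doubleFactorial_add_one, nsmul_eq_mul,
      pow_succ]
    push_cast
    ring

end CommSemiring

lemma partitionSum_sub_partitionSum [CommRing R] {h h' : ℕ → R} {s : Finset α}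
    (hs : s.Nonempty) (hhh' : ∀ n, 0 < n → n < #s → h n = h' n) :
    partitionSum h s - partitionSum h' s = h #s - h' #s := by
  rw [partitionSum, partitionSum, ← sum_sub_distrib,
    sum_eq_single_of_mem (Finpartition.indiscrete hs.ne_empty) (mem_univ _) fun π _ hπ => ?_]
  · simp
  · rw [sub_eq_zero]
    refine prod_congr rfl fun V hV => hhh' _ (card_pos.2 (π.nonempty_of_mem_parts hV)) ?_
    exact Finpartition.card_lt_of_ne_indiscrete hs.ne_empty hπ hV

end PartitionSum

noncomputable def cumulantWeight (N : ℕ) (κ : ℕ → ℝ) (n : ℕ) : ℝ :=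
  (-1) ^ (n - 1) * N * ((n - 1)! * κ n)

lemma cumulantRel_iff {N : ℕ} {a κ : ℕ → ℝ} :
    cumulantRel N a κ ↔ ∀ k, 1 ≤ k → k ≤ N →
      a k = (N.descFactorial k / (N ^ k * k !)) *
        partitionSum (cumulantWeight N κ) (univ : Finset (Fin k)) := by
  refine forall₃_congr fun k _ _ => ?_
  simp only [partitionSum, cumulantWeight,
    ← Finpartition.neg_one_pow_mul_pow_mul_prod _ (N : ℝ) fun n => (n - 1)! * κ n, card_fin]

lemma cumulantRel_unique {N : ℕ} {a κ κ' : ℕ → ℝ} (hκ : cumulantRel N a κ)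
    (hκ' : cumulantRel N a κ') : ∀ k, 1 ≤ k → k ≤ N → κ k = κ' k := by
  intro k
  induction k using Nat.strong_induction_on with
  | _ k ih =>
  intro hk hkN
  have hN : (N : ℝ) ≠ 0 := Nat.cast_ne_zero.2 (by omega)
  have hc : (N.descFactorial k / (N ^ k * k !) : ℝ) ≠ 0 := by
    have : 0 < N.descFactorial k := Nat.descFactorial_pos.2 hkN
    positivity
  have hsum : partitionSum (cumulantWeight N κ) (univ : Finset (Fin k)) =
      partitionSum (cumulantWeight N κ') univ :=
    mul_left_cancel₀ hc
      ((cumulantRel_iff.1 hκ k hk hkN).symm.trans (cumulantRel_iff.1 hκ' k hk hkN))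
  have hweight := partitionSum_sub_partitionSum (h := cumulantWeight N κ)
    (h' := cumulantWeight N κ') (s := (univ : Finset (Fin k))) ⟨⟨0, hk⟩, mem_univ _⟩
    fun n hn hnk => by
      rw [card_fin] at hnk
      rw [cumulantWeight, cumulantWeight, ih n hnk hn (by omega)]
  rw [hsum, sub_self, card_fin, eq_comm, sub_eq_zero] at hweight
  simpa [cumulantWeight, hN, Nat.factorial_ne_zero] using hweight

lemma coeff_hermiteP_sub_two_mul {ℓ m : ℕ} (hm : 2 * m ≤ ℓ) :
    (hermiteP ℓ).coeff (ℓ - 2 * m) = ℓ ! * (-1) ^ m / (m ! * (ℓ - 2 * m)! * 2 ^ m) := by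
  rw [hermiteP, finsetSum_coeff,
    sum_eq_single_of_mem m (mem_range.2 (by omega)) fun j hj hjm => ?_]
  · simp
  · have := mem_range.1 hj
    rw [coeff_C_mul_X_pow, if_neg (by omega)]

lemma coeff_hermiteP_sub_of_odd {ℓ k : ℕ} (hk : Odd k) (hkℓ : k ≤ ℓ) :
    (hermiteP ℓ).coeff (ℓ - k) = 0 := by
  rw [hermiteP, finsetSum_coeff]
  refine sum_eq_zero fun j hj => ?_
  obtain ⟨i, rfl⟩ := hk
  have := mem_range.1 hj
  rw [coeff_C_mul_X_pow, if_neg (by omega)]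

lemma cumulantRel_hermiteP (ℓ : ℕ) :
    cumulantRel ℓ (coeffSeq ℓ (hermiteP ℓ)) (fun j => if j = 2 then (ℓ : ℝ) else 0) := by
  rw [cumulantRel_iff]
  intro k hk hkℓ
  set w := cumulantWeight ℓ (fun j => if j = 2 then (ℓ : ℝ) else 0)
  have hw : ∀ n, n ≠ 2 → w n = 0 := fun n hn => by simp [w, cumulantWeight, hn]
  have hw2 : w 2 = -ℓ ^ 2 := by simp [w, cumulantWeight]; ring
  obtain ⟨m, rfl | rfl⟩ := Nat.even_or_odd' k
  · rw [coeffSeq, coeff_hermiteP_sub_two_mul hkℓ,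
      partitionSum_of_card_eq_two_mul hw (card_fin _), hw2]
    have hℓ : (ℓ : ℝ) ≠ 0 := Nat.cast_ne_zero.2 (by omega)
    have hfac : (ℓ ! : ℝ) = (ℓ - 2 * m)! * ℓ.descFactorial (2 * m) := by
      exact_mod_cast (Nat.factorial_mul_descFactorial hkℓ).symm
    have hfac2 : ((2 * m)! : ℝ) = 2 ^ m * m ! * (2 * m - 1)‼ := by
      exact_mod_cast Nat.factorial_two_mul_eq_mul_doubleFactorial m
    rw [hfac, hfac2, (even_two_mul m).neg_one_pow, one_mul, neg_pow ((ℓ : ℝ) ^ 2), ← pow_mul]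
    field_simp
  · rw [coeffSeq, coeff_hermiteP_sub_of_odd (odd_two_mul_add_one m) hkℓ,
      partitionSum_of_card_eq_two_mul_add_one hw (card_fin _)]
    simp

theorem hermiteP_cumulants_general (ℓ : ℕ) (κ : ℕ → ℝ)
    (hκ : cumulantRel ℓ (coeffSeq ℓ (hermiteP ℓ)) κ) :
    ∀ j, 1 ≤ j → j ≤ ℓ → κ j = if j = 2 then (ℓ : ℝ) else 0 :=
  cumulantRel_unique hκ (cumulantRel_hermiteP ℓ)

/-- the finite free cumulants of `He_ℓ` are `κ_j^ℓ(He_ℓ) = ℓ·δ_{j2}`. -/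
theorem hermiteP_cumulants (ℓ : ℕ) (hℓ : 1 ≤ ℓ) (κ : ℕ → ℝ)
    (hκ : cumulantRel ℓ (coeffSeq ℓ (hermiteP ℓ)) κ) :
    ∀ j, 1 ≤ j → j ≤ ℓ → κ j = if j = 2 then (ℓ : ℝ) else 0 :=
  hermiteP_cumulants_general ℓ κ hκ
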